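/- arXiv:1611.10348 — 2 statements merged into one kernel-verified Lean document; each statement's English description precedes it below -/
import Mathlib

section
/- For all real x < 0, the quantity 2·(e^x − 1)/x − (e^x − 1 − x)/(x²/2) equals (2/x)·∑_{k=1}^∞ (k/(k+1)!)·x^k, and this quantity is nonnegative. -/
/-- `(e^x − 1 − x)/(x²/2)`. -/
noncomputable def Efun (x : ℝ) : ℝ := (Real.exp x - 1 - x) / (x ^ 2 / 2)

/-- `(e^x − 1)/x`. -/
noncomputable def Tfun (x : ℝ) : ℝ := (Real.exp x - 1) / x

/-!
Since `k/(k+1)! = 1/k! - 1/(k+1)!`, the series splits into two tails of the exponential series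
and sums to `(e^x - 1) - (e^x - 1 - x)/x`. For nonnegativity, `2T - E = 2(1 - (1 - x)e^x)/x²`,
and `(1 - x)e^x ≤ 1` is `1 - x ≤ e^(-x)`.
-/

open Real Finset Nat

lemma cast_add_one_div_factorial_add_two {K : Type*} [Field K] [CharZero K] (k : ℕ) :
    ((k + 1 : ℕ) : K) / (k + 2)! = 1 / (k + 1)! - 1 / (k + 2)! := by
  have h : ((k + 2)! : K) = (k + 2) * (k + 1)! := by push_cast [factorial_succ (k + 1)]; ring
  have : ((k + 1)! : K) ≠ 0 := by exact_mod_cast factorial_ne_zero _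
  have : (k + 2 : K) ≠ 0 := by norm_cast
  rw [h]
  field_simp
  push_cast
  ring

lemma hasSum_pow_add_div_factorial (x : ℝ) (n : ℕ) :
    HasSum (fun k ↦ x ^ (k + n) / (k + n)!) (exp x - ∑ i ∈ range n, x ^ i / i !) := by
  rw [hasSum_nat_add_iff' n (f := fun k ↦ x ^ k / k !), exp_eq_exp_ℝ]
  exact NormedSpace.expSeries_div_hasSum_exp x

lemma hasSum_cast_add_one_div_factorial_mul_pow {x : ℝ} (hx : x ≠ 0) :
    HasSum (fun k : ℕ ↦ ((k + 1 : ℕ) : ℝ) / (k + 2)! * x ^ (k + 1))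
      (exp x - 1 - (exp x - 1 - x) / x) := by
  have h₁ := hasSum_pow_add_div_factorial x 1
  have h₂ := (hasSum_pow_add_div_factorial x 2).div_const x
  simp only [sum_range_succ, sum_range_zero, pow_zero, pow_one, factorial_zero, factorial_one,
    cast_one, div_one, zero_add, sub_add_eq_sub_sub] at h₁ h₂
  refine (h₁.sub h₂).congr_fun fun k ↦ ?_
  rw [cast_add_one_div_factorial_add_two, pow_succ x (k + 1)]
  field_simp

lemma one_sub_mul_exp_le_one (x : ℝ) : (1 - x) * exp x ≤ 1 :=
  calc (1 - x) * exp x ≤ exp (-x) * exp x := by gcongr; exact one_sub_le_exp_neg x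
    _ = 1 := by rw [← exp_add, neg_add_cancel, exp_zero]

lemma two_mul_Tfun_sub_Efun {x : ℝ} (hx : x ≠ 0) :
    2 * Tfun x - Efun x = 2 * (1 - (1 - x) * exp x) / x ^ 2 := by
  unfold Tfun Efun
  field_simp
  ring

/-- For `x < 0`, `2(e^x−1)/x − (e^x−1−x)/(x²/2) = (2/x)·∑_{k=1}^∞ (k/(k+1)!) x^k`,
and this quantity is nonnegative. -/
theorem stmt2 (x : ℝ) (hx : x < 0) :
    2 * Tfun x - Efun x
      = (2 / x) * ∑' k : ℕ, (((k + 1 : ℕ) : ℝ) / (Nat.factorial (k + 2) : ℝ)) * x ^ (k + 1) ∧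
    0 ≤ 2 * Tfun x - Efun x := by
  have hx₀ := hx.ne
  constructor
  · rw [(hasSum_cast_add_one_div_factorial_mul_pow hx₀).tsum_eq, Tfun, Efun]
    field_simp
  · rw [two_mul_Tfun_sub_Efun hx₀]
    have h : 0 ≤ 1 - (1 - x) * exp x := sub_nonneg.mpr (one_sub_mul_exp_le_one x)
    positivity
end

section
/- Let φ₁, φ₂ : I → ℝ be functions whose difference δ = φ₁ − φ₂ satisfies the Lipschitz-type condition |δ(x) − δ(y)| ≤ M|x − y| for all x, y ∈ I with M = φU' − φL' > 0. If there exists x ∈ I with δ(x) ≥ d > 0 and I contains an interval J of length (d/2)/M containing x (or having x as an endpoint), then ∫_I δ(u)² du ≥ d³/(8M). -/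
open MeasureTheory Set

/-- If `δ` is `M`-Lipschitz on the interval `I = [a, b]`, there is a point `x` of a
subinterval `J = [c, e] ⊆ I` of length `(d/2)/M` with `δ(x) ≥ d > 0`, then
`∫_I δ² ≥ d³/(8M)`. -/
theorem stmt4 (a b c e x d M : ℝ) (hd : 0 < d) (hM : 0 < M)
    (δ : ℝ → ℝ)
    (hlip : ∀ u ∈ Icc a b, ∀ v ∈ Icc a b, |δ u - δ v| ≤ M * |u - v|)
    (hJ : Icc c e ⊆ Icc a b) (hce : e - c = (d / 2) / M)
    (hx : x ∈ Icc c e) (hδx : d ≤ δ x) :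
    d ^ 3 / (8 * M) ≤ ∫ u in a..b, (δ u) ^ 2 := by
  have hce' : c ≤ e := by nlinarith [div_pos (div_pos hd two_pos) hM]
  have hxI : x ∈ Icc a b := hJ hx
  have hab : a ≤ b := hxI.1.trans hxI.2
  have hac : a ≤ c := (hJ (left_mem_Icc.2 hce')).1
  have heb : e ≤ b := (hJ (right_mem_Icc.2 hce')).2
  -- δ ≥ d/2 on [c,e]
  have hlow : ∀ y ∈ Icc c e, d / 2 ≤ δ y := by
    intro y hy
    have h1 : |δ x - δ y| ≤ M * |x - y| := hlip x hxI y (hJ hy)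
    have h2 : |x - y| ≤ e - c := by
      rw [abs_sub_le_iff]
      constructor <;> [linarith [hx.1, hx.2, hy.1, hy.2]; linarith [hx.1, hx.2, hy.1, hy.2]]
    have h3 : M * |x - y| ≤ d / 2 := by
      calc M * |x - y| ≤ M * (e - c) := by nlinarith
        _ = d / 2 := by rw [hce]; field_simp
    have := abs_sub_le_iff.1 h1
    linarith [this.1, this.2]
  -- continuity / integrability
  have hcont : ContinuousOn (fun u => (δ u) ^ 2) (Icc a b) := by
    have : ContinuousOn δ (Icc a b) := by
      have : LipschitzOnWith (Real.toNNReal M) δ (Icc a b) := by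
        apply LipschitzOnWith.of_dist_le_mul
        intro u hu v hv
        have := hlip u hu v hv
        have hMnn : (Real.toNNReal M : ℝ) = M := Real.coe_toNNReal M hM.le
        rw [hMnn, Real.dist_eq, Real.dist_eq]
        exact this
      exact this.continuousOn
    exact this.pow 2
  have hint : IntervalIntegrable (fun u => (δ u) ^ 2) volume a b := by
    apply ContinuousOn.intervalIntegrable
    rwa [uIcc_of_le hab]
  have hint1 : IntervalIntegrable (fun u => (δ u) ^ 2) volume a c :=
    hint.mono_set (by rw [uIcc_of_le hab, uIcc_of_le hac]; exact Icc_subset_Icc le_rfl (hce'.trans heb))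
  have hint2 : IntervalIntegrable (fun u => (δ u) ^ 2) volume c e :=
    hint.mono_set (by rw [uIcc_of_le hab, uIcc_of_le hce']; exact Icc_subset_Icc hac heb)
  have hint3 : IntervalIntegrable (fun u => (δ u) ^ 2) volume e b :=
    hint.mono_set (by rw [uIcc_of_le hab, uIcc_of_le heb]; exact Icc_subset_Icc (hac.trans hce') le_rfl)
  have hsplit : (∫ u in a..b, (δ u) ^ 2) =
      (∫ u in a..c, (δ u) ^ 2) + (∫ u in c..e, (δ u) ^ 2) + (∫ u in e..b, (δ u) ^ 2) := by
    rw [← intervalIntegral.integral_add_adjacent_intervals (hint1.trans hint2) hint3,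
      ← intervalIntegral.integral_add_adjacent_intervals hint1 hint2]
  have hnn1 : 0 ≤ ∫ u in a..c, (δ u) ^ 2 :=
    intervalIntegral.integral_nonneg hac (fun u _ => sq_nonneg _)
  have hnn3 : 0 ≤ ∫ u in e..b, (δ u) ^ 2 :=
    intervalIntegral.integral_nonneg heb (fun u _ => sq_nonneg _)
  have hmid : d ^ 3 / (8 * M) ≤ ∫ u in c..e, (δ u) ^ 2 := by
    have hconst : (∫ u in c..e, (d / 2) ^ 2) = (d / 2) ^ 2 * (e - c) := by
      simp [intervalIntegral.integral_const, mul_comm]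
    have hle : (∫ u in c..e, (d / 2) ^ 2) ≤ ∫ u in c..e, (δ u) ^ 2 := by
      apply intervalIntegral.integral_mono_on hce' (by simp) hint2
      intro u hu
      have h := hlow u hu
      nlinarith
    have : (d / 2) ^ 2 * (e - c) = d ^ 3 / (8 * M) := by
      rw [hce]; field_simp; ring
    linarith
  linarith
end
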